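/- arXiv:0707.2114 — 2 statements merged into one kernel-verified Lean document; each statement's English description precedes it below -/
import Mathlib

section
/- Assume that both A and its transpose A^t satisfy Cuntz–Krieger condition (I). Then for every x ∈ X_A the orbit of x under the topological full group equals the orbit of x under the shift: { τ(x) : τ ∈ [σ_A]_c } = orb_{σ_A}(x). -/
open Matrix

/-- The one-sided topological Markov shift space `X_A` determined by a square matrix `A`
(with entries in `{0,1}`): sequences `x : ℕ → Fin N` with `A (x n) (x (n+1)) = 1` for all
`n`, carrying the (subspace of the) product topology. -/
abbrev MarkovShift {N : ℕ} (A : Matrix (Fin N) (Fin N) ℕ) : Type :=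
  { x : ℕ → Fin N // ∀ n, A (x n) (x (n + 1)) = 1 }

/-- The shift transformation `σ_A`. -/
def mshift {N : ℕ} (A : Matrix (Fin N) (Fin N) ℕ) :
    MarkovShift A → MarkovShift A :=
  fun x => ⟨fun n => x.1 (n + 1), fun n => x.2 (n + 1)⟩

/-- The orbit `orb_{σ_A}(x) = ⋃_{k≥0} ⋃_{l≥0} σ_A^{-k}(σ_A^l(x))` of `x`. -/
def orb {N : ℕ} (A : Matrix (Fin N) (Fin N) ℕ) (x : MarkovShift A) :
    Set (MarkovShift A) :=
  { y | ∃ k l : ℕ, (mshift A)^[k] y = (mshift A)^[l] x }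

/-- The full group `[σ_A]`: homeomorphisms moving every point within its orbit. -/
def fullGroup {N : ℕ} (A : Matrix (Fin N) (Fin N) ℕ) :
    Set (MarkovShift A ≃ₜ MarkovShift A) :=
  { τ | ∀ x, τ x ∈ orb A x }

/-- The topological full group `[σ_A]_c`: elements of the full group with continuous
orbit cocycles. -/
def topFullGroup {N : ℕ} (A : Matrix (Fin N) (Fin N) ℕ) :
    Set (MarkovShift A ≃ₜ MarkovShift A) :=
  { τ | τ ∈ fullGroup A ∧ ∃ k l : MarkovShift A → ℕ, Continuous k ∧ Continuous l ∧
      ∀ x, (mshift A)^[k x] (τ x) = (mshift A)^[l x] x }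

/-- Cuntz–Krieger condition (I), formulated as: the shift space has no isolated points. -/
def ConditionI {N : ℕ} (A : Matrix (Fin N) (Fin N) ℕ) : Prop :=
  ∀ x : MarkovShift A, ¬ IsOpen ({x} : Set (MarkovShift A))

/-!
If `σ^k y = σ^l x` and `x ≠ y`, pick `n` with `xₙ ≠ yₙ`. The cylinders `U` of `x` of length
`l + n + 1` and `V` of `y` of length `k + n + 1` are disjoint and clopen, and replacing the
prefix `x₀ … x_{l-1}` by `y₀ … y_{k-1}` maps `U` onto `V`, with the reverse replacement as
inverse; the extra `n + 1` symbols keep the spliced sequences admissible. Exchanging `U` and `V`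
this way and fixing everything else is a continuous involution taking `x` to `y`, and its orbit
cocycles are constant on `U`, on `V` and on the rest, hence continuous.
-/

open Function Set PiNat

section Swap

variable {X : Type*}

theorem IsClopen.continuous_piecewise {Y : Type*} [TopologicalSpace X] [TopologicalSpace Y]
    {s : Set X} [∀ a, Decidable (a ∈ s)] (hs : IsClopen s) {f g : X → Y}
    (hf : Continuous f) (hg : Continuous g) : Continuous (s.piecewise f g) :=
  hf.piecewise (by simp [hs.frontier_eq]) hg

open Classical in
noncomputable def swapOn (U V : Set X) (f g : X → X) : X → X :=
  U.piecewise f (V.piecewise g id)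

variable {U V : Set X} {f g : X → X} {w : X}

theorem swapOn_of_mem_left (hw : w ∈ U) : swapOn U V f g w = f w := by
  classical
  simp [swapOn, hw]

theorem swapOn_of_mem_right (hU : w ∉ U) (hV : w ∈ V) : swapOn U V f g w = g w := by
  classical
  simp [swapOn, hU, hV]

theorem swapOn_of_notMem (hU : w ∉ U) (hV : w ∉ V) : swapOn U V f g w = w := by
  classical
  simp [swapOn, hU, hV]

theorem swapOn_involutive (hUV : Disjoint U V) (hf : MapsTo f U V) (hg : MapsTo g V U)
    (hgf : ∀ w ∈ U, g (f w) = w) (hfg : ∀ w ∈ V, f (g w) = w) :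
    Involutive (swapOn U V f g) := by
  intro w
  by_cases hU : w ∈ U
  · rw [swapOn_of_mem_left hU, swapOn_of_mem_right (hUV.notMem_of_mem_right (hf hU)) (hf hU),
      hgf w hU]
  by_cases hV : w ∈ V
  · rw [swapOn_of_mem_right hU hV, swapOn_of_mem_left (hg hV), hfg w hV]
  · rw [swapOn_of_notMem hU hV, swapOn_of_notMem hU hV]

theorem continuous_swapOn [TopologicalSpace X] (hU : IsClopen U) (hV : IsClopen V)
    (hf : Continuous f) (hg : Continuous g) : Continuous (swapOn U V f g) := by
  classical
  exact hU.continuous_piecewise hf (hV.continuous_piecewise hg continuous_id)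

end Swap

def Function.Involutive.toHomeomorph {X : Type*} [TopologicalSpace X] {f : X → X}
    (hf : Involutive f) (hc : Continuous f) : X ≃ₜ X where
  toEquiv := hf.toPerm f
  continuous_toFun := hc
  continuous_invFun := hc

section Cylinder

variable {α : Type*}

theorem isClopen_cylinder [TopologicalSpace α] [DiscreteTopology α] (x : ℕ → α) (n : ℕ) :
    IsClopen (cylinder x n) := by
  refine ⟨?_, isOpen_cylinder (fun _ => α) x n⟩
  rw [cylinder_eq_pi]
  exact isClosed_set_pi fun _ _ => isClosed_discrete _

theorem disjoint_cylinder_of_ne {x y : ℕ → α} {n a b : ℕ} (h : x n ≠ y n) (ha : n < a)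
    (hb : n < b) : Disjoint (cylinder x a) (cylinder y b) :=
  Set.disjoint_left.2 fun _ hx hy => h ((hx n ha).symm.trans (hy n hb))

end Cylinder

section Splice

variable {α : Type*}

def splice (y : ℕ → α) (k l : ℕ) (w : ℕ → α) : ℕ → α :=
  fun i => if i < k then y i else w (i - k + l)

variable {x y w : ℕ → α} {k l : ℕ}

theorem splice_add_right (y : ℕ → α) (k l : ℕ) (w : ℕ → α) (i : ℕ) :
    splice y k l w (i + k) = w (i + l) := by
  simp [splice]

theorem continuous_splice [TopologicalSpace α] (y : ℕ → α) (k l : ℕ) :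
    Continuous (splice y k l) :=
  continuous_pi fun i => by
    unfold splice
    split_ifs
    exacts [continuous_const, continuous_apply _]

theorem splice_eq_of_shift_eq (hxy : ∀ i, y (i + k) = x (i + l)) : splice y k l x = y := by
  funext i
  unfold splice
  split_ifs with hi
  · rfl
  · rw [← hxy, Nat.sub_add_cancel (not_lt.1 hi)]

theorem splice_mem_cylinder (hxy : ∀ i, y (i + k) = x (i + l)) {m : ℕ}
    (hw : w ∈ cylinder x (l + m)) : splice y k l w ∈ cylinder y (k + m) := by
  intro i hi
  unfold splice
  split_ifs with hik
  · rfl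
  · rw [hw _ (by omega), ← hxy, Nat.sub_add_cancel (not_lt.1 hik)]

theorem splice_splice (hw : w ∈ cylinder x l) : splice x l k (splice y k l w) = w := by
  funext i
  unfold splice
  split_ifs with hil hk
  · exact (hw i hil).symm
  · omega
  · congr 1
    omega

theorem splice_chain {R : α → α → Prop} (hy : ∀ n, R (y n) (y (n + 1)))
    (hw : ∀ n, R (w n) (w (n + 1))) (hjoin : w l = y k) :
    ∀ n, R (splice y k l w n) (splice y k l w (n + 1)) := by
  intro n
  unfold splice
  rcases lt_trichotomy (n + 1) k with h | h | h
  · rw [if_pos (by omega), if_pos h]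
    exact hy n
  · rw [if_pos (by omega), if_neg (by omega), h, Nat.sub_self, zero_add, hjoin, ← h]
    exact hy n
  · rw [if_neg (by omega), if_neg (by omega), show n + 1 - k + l = n - k + l + 1 by omega]
    exact hw _

end Splice

section SpliceSwap

variable {α : Type*} {x y : ℕ → α} {k l m : ℕ}

noncomputable def spliceSwap (x y : ℕ → α) (k l m : ℕ) : (ℕ → α) → (ℕ → α) :=
  swapOn (cylinder x (l + m)) (cylinder y (k + m)) (splice y k l) (splice x l k)

theorem spliceSwap_involutive (hxy : ∀ i, y (i + k) = x (i + l))
    (hdisj : Disjoint (cylinder x (l + m)) (cylinder y (k + m))) :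
    Involutive (spliceSwap x y k l m) :=
  swapOn_involutive hdisj (fun _ => splice_mem_cylinder hxy)
    (fun _ => splice_mem_cylinder fun i => (hxy i).symm)
    (fun _ hw => splice_splice (cylinder_anti _ (by omega) hw))
    (fun _ hw => splice_splice (cylinder_anti _ (by omega) hw))

theorem continuous_spliceSwap [TopologicalSpace α] [DiscreteTopology α] :
    Continuous (spliceSwap x y k l m) :=
  continuous_swapOn (isClopen_cylinder _ _) (isClopen_cylinder _ _)
    (continuous_splice _ _ _) (continuous_splice _ _ _)

theorem spliceSwap_apply_left (hxy : ∀ i, y (i + k) = x (i + l)) :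
    spliceSwap x y k l m x = y := by
  rw [spliceSwap, swapOn_of_mem_left (self_mem_cylinder _ _), splice_eq_of_shift_eq hxy]

theorem spliceSwap_chain {R : α → α → Prop} (hx : ∀ n, R (x n) (x (n + 1)))
    (hy : ∀ n, R (y n) (y (n + 1))) (hxy : ∀ i, y (i + k) = x (i + l)) (hm : 0 < m)
    {w : ℕ → α} (hw : ∀ n, R (w n) (w (n + 1))) :
    ∀ n, R (spliceSwap x y k l m w n) (spliceSwap x y k l m w (n + 1)) := by
  have hyx : y k = x l := by simpa using hxy 0
  by_cases hU : w ∈ cylinder x (l + m)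
  · rw [spliceSwap, swapOn_of_mem_left hU]
    exact splice_chain hy hw ((hU l (by omega)).trans hyx.symm)
  by_cases hV : w ∈ cylinder y (k + m)
  · rw [spliceSwap, swapOn_of_mem_right hU hV]
    exact splice_chain hx hw ((hV k (by omega)).trans hyx)
  · rwa [spliceSwap, swapOn_of_notMem hU hV]

theorem exists_continuous_spliceSwap_cocycle [TopologicalSpace α] [DiscreteTopology α] :
    ∃ p q : (ℕ → α) → ℕ, Continuous p ∧ Continuous q ∧
      ∀ w i, spliceSwap x y k l m w (i + p w) = w (i + q w) := by
  classical
  set U := cylinder x (l + m)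
  set V := cylinder y (k + m)
  have hU : IsClopen U := isClopen_cylinder x (l + m)
  have hV : IsClopen V := isClopen_cylinder y (k + m)
  refine ⟨U.piecewise (fun _ => k) (V.piecewise (fun _ => l) fun _ => 0),
    U.piecewise (fun _ => l) (V.piecewise (fun _ => k) fun _ => 0),
    hU.continuous_piecewise continuous_const
      (hV.continuous_piecewise continuous_const continuous_const),
    hU.continuous_piecewise continuous_const
      (hV.continuous_piecewise continuous_const continuous_const),
    fun w i => ?_⟩
  by_cases hwU : w ∈ U
  · rw [piecewise_eq_of_mem _ _ _ hwU, piecewise_eq_of_mem _ _ _ hwU, spliceSwap,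
      swapOn_of_mem_left hwU, splice_add_right]
  by_cases hwV : w ∈ V
  · rw [piecewise_eq_of_notMem _ _ _ hwU, piecewise_eq_of_notMem _ _ _ hwU,
      piecewise_eq_of_mem _ _ _ hwV, piecewise_eq_of_mem _ _ _ hwV, spliceSwap,
      swapOn_of_mem_right hwU hwV, splice_add_right]
  · rw [spliceSwap, swapOn_of_notMem hwU hwV, piecewise_eq_of_notMem _ _ _ hwU,
      piecewise_eq_of_notMem _ _ _ hwU, piecewise_eq_of_notMem _ _ _ hwV,
      piecewise_eq_of_notMem _ _ _ hwV]

end SpliceSwap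

section MarkovShift

variable {N : ℕ} {A : Matrix (Fin N) (Fin N) ℕ}

theorem mshift_iterate_apply (p : ℕ) (w : MarkovShift A) (i : ℕ) :
    ((mshift A)^[p] w).1 i = w.1 (i + p) := by
  induction p generalizing w with
  | zero => rfl
  | succ p ih => rw [iterate_succ_apply, ih, ← add_assoc]; rfl

theorem mshift_iterate_eq_iff {x y : MarkovShift A} {k l : ℕ} :
    (mshift A)^[k] y = (mshift A)^[l] x ↔ ∀ i, y.1 (i + k) = x.1 (i + l) := by
  simp only [Subtype.ext_iff, funext_iff, mshift_iterate_apply]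

theorem mem_topFullGroup_of_cocycle (τ : MarkovShift A ≃ₜ MarkovShift A)
    {p q : MarkovShift A → ℕ} (hp : Continuous p) (hq : Continuous q)
    (h : ∀ x, (mshift A)^[p x] (τ x) = (mshift A)^[q x] x) : τ ∈ topFullGroup A :=
  ⟨fun x => ⟨p x, q x, h x⟩, p, q, hp, hq, h⟩

theorem exists_mem_topFullGroup_apply_eq {x y : MarkovShift A} (hy : y ∈ orb A x) :
    ∃ τ ∈ topFullGroup A, τ x = y := by
  obtain ⟨k, l, hkl⟩ := hy
  rw [mshift_iterate_eq_iff] at hkl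
  by_cases hxy : x = y
  · exact ⟨Homeomorph.refl _,
      mem_topFullGroup_of_cocycle _ (p := 0) (q := 0) continuous_const continuous_const
        fun _ => rfl, hxy⟩
  obtain ⟨n, hn⟩ : ∃ n, x.1 n ≠ y.1 n := by
    by_contra! h
    exact hxy (Subtype.ext (funext h))
  have hΦ : Involutive (spliceSwap x.1 y.1 k l (n + 1)) :=
    spliceSwap_involutive hkl (disjoint_cylinder_of_ne hn (by omega) (by omega))
  have hadm : ∀ w : ℕ → Fin N, (∀ i, A (w i) (w (i + 1)) = 1) → ∀ i,
      A (spliceSwap x.1 y.1 k l (n + 1) w i) (spliceSwap x.1 y.1 k l (n + 1) w (i + 1)) = 1 :=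
    fun _ => spliceSwap_chain (R := fun i j => A i j = 1) x.2 y.2 hkl (Nat.succ_pos n)
  let τ : MarkovShift A ≃ₜ MarkovShift A :=
    (Subtype.map_involutive hadm hΦ).toHomeomorph (continuous_spliceSwap.subtype_map hadm)
  obtain ⟨p, q, hp, hq, hpq⟩ :=
    exists_continuous_spliceSwap_cocycle (x := x.1) (y := y.1) (k := k) (l := l) (m := n + 1)
  refine ⟨τ, mem_topFullGroup_of_cocycle τ (hp.comp continuous_subtype_val)
    (hq.comp continuous_subtype_val) fun w => mshift_iterate_eq_iff.2 (hpq w.1), ?_⟩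
  exact Subtype.ext (spliceSwap_apply_left hkl)

end MarkovShift

theorem topFullGroup_orbit_eq_orb_general
    {N : ℕ} (A : Matrix (Fin N) (Fin N) ℕ) :
    ∀ x : MarkovShift A,
      { y : MarkovShift A | ∃ τ ∈ topFullGroup A, τ x = y } = orb A x := by
  intro x
  ext y
  exact ⟨fun ⟨τ, hτ, hτx⟩ => hτx ▸ hτ.1 x, exists_mem_topFullGroup_apply_eq⟩

/-- if `A` and `Aᵀ` satisfy condition (I), then for every `x ∈ X_A` the
orbit of `x` under the topological full group equals the `σ_A`-orbit of `x`:
`{ τ(x) : τ ∈ [σ_A]_c } = orb_{σ_A}(x)`. -/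
theorem topFullGroup_orbit_eq_orb
    {N : ℕ} (hN : 2 ≤ N) (A : Matrix (Fin N) (Fin N) ℕ)
    (hA : ∀ i j, A i j = 0 ∨ A i j = 1)
    (hI : ConditionI A) (hIt : ConditionI Aᵀ) :
    ∀ x : MarkovShift A,
      { y : MarkovShift A | ∃ τ ∈ topFullGroup A, τ x = y } = orb A x :=
  topFullGroup_orbit_eq_orb_general A
end

section
/- Assume A and B satisfy Cuntz–Krieger condition (I). If h : X_A → X_B is a homeomorphism implementing a topological orbit equivalence between (X_A, σ_A) and (X_B, σ_B), then the unitary u_h : ℓ²(X_A) → ℓ²(X_B) defined by u_h e_x = e_{h(x)} satisfies u_h O_A u_h^* = O_B and u_h M_f u_h^* = M_{f ∘ h^{-1}} for all f ∈ C(X_A,ℂ); in particular u_h D_A u_h^* = D_B, so Ad(u_h) is an isomorphism Φ : O_A → O_B with Φ(D_A) = D_B. -/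
open Matrix

noncomputable section

/-- The Hilbert space `ℓ²(X_A)` with orthonormal basis indexed by points of `X_A`. -/
abbrev MSHilbert {N : ℕ} (A : Matrix (Fin N) (Fin N) ℕ) : Type :=
  lp (fun _ : MarkovShift A => ℂ) 2

/-- The standard orthonormal basis vector `e_x` of `ℓ²(X_A)`. -/
def basisVec {N : ℕ} (A : Matrix (Fin N) (Fin N) ℕ) (x : MarkovShift A) :
    MSHilbert A :=
  letI : DecidableEq (MarkovShift A) := Classical.decEq _
  lp.single 2 x 1

/-- The point `ix = (i, x₁, x₂, …) ∈ X_A`, defined when `A(i, x₁) = 1`. -/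
def mcons {N : ℕ} (A : Matrix (Fin N) (Fin N) ℕ) (j : Fin N) (x : MarkovShift A)
    (h : A j (x.1 0) = 1) : MarkovShift A :=
  ⟨fun n => Nat.casesOn n j fun m => x.1 m, by
    intro n
    cases n with
    | zero => exact h
    | succ m => exact x.2 m⟩

/-- `T` acts on the basis by `T e_x = e_{ix}` if `ix ∈ X_A`, and `T e_x = 0` otherwise;
this is the defining property of the canonical generating partial isometry `T_i`. -/
def IsShiftOp {N : ℕ} (A : Matrix (Fin N) (Fin N) ℕ) (i : Fin N)
    (T : MSHilbert A →L[ℂ] MSHilbert A) : Prop :=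
  ∀ x : MarkovShift A,
    (∀ h : A i (x.1 0) = 1, T (basisVec A x) = basisVec A (mcons A i x h)) ∧
    (¬ A i (x.1 0) = 1 → T (basisVec A x) = 0)

/-- `T` is the family `T_1, …, T_N` of canonical generating partial isometries. -/
def IsGenFamily {N : ℕ} (A : Matrix (Fin N) (Fin N) ℕ)
    (T : Fin N → (MSHilbert A →L[ℂ] MSHilbert A)) : Prop :=
  ∀ i, IsShiftOp A i (T i)

/-- `M` assigns to every `f ∈ C(X_A, ℂ)` the multiplication operator `M_f`,
characterized by `M_f e_x = f(x) • e_x`. -/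
def IsMultOp {N : ℕ} (A : Matrix (Fin N) (Fin N) ℕ)
    (M : C(MarkovShift A, ℂ) → (MSHilbert A →L[ℂ] MSHilbert A)) : Prop :=
  ∀ (f : C(MarkovShift A, ℂ)) (x : MarkovShift A),
    M f (basisVec A x) = f x • basisVec A x

/-- The Cuntz–Krieger algebra `O_A`: the norm closure of the ∗-subalgebra of
`B(ℓ²(X_A))` generated by `T_1, …, T_N`. -/
def CKalg {N : ℕ} (A : Matrix (Fin N) (Fin N) ℕ)
    (T : Fin N → (MSHilbert A →L[ℂ] MSHilbert A)) :
    StarSubalgebra ℂ (MSHilbert A →L[ℂ] MSHilbert A) :=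
  (StarAlgebra.adjoin ℂ (Set.range T)).topologicalClosure


/-!
Conjugation by `u : e_x ↦ e_{h x}` is a continuous ∗-isomorphism `B(ℓ²(X_A)) ≃ B(ℓ²(X_B))`
sending `M_f` to `M_{f ∘ h⁻¹}`, so everything reduces to showing that it maps each generator
`T_i` of `O_A` into `O_B` (and symmetrically with `h⁻¹`). Conjugating `T_i^*` gives the operator
`e_y ↦ [h⁻¹(y)₀ = i] e_{τ y}` with `τ = h ∘ σ_A ∘ h⁻¹`, and the cocycle identity reads
`σ_B^{k y}(τ y) = σ_B^{l y}(y)` with `k, l` continuous. The pair of words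
`(τ(y)_{[0, k y)}, y_{[0, l y)}) = (μ, ν)` is then a locally constant function of `y`, so it takes
finitely many values on clopen sets `W`, and on `e_y` with `y ∈ W` the operator agrees with
`S_μ S_ν^*`. Since a clopen set is determined by the words of some fixed length `n`, its diagonal
projection is `P_W = ∑ S_w S_w^*` over those words, and the operator is `∑ S_μ S_ν^* P_W ∈ O_B`.
-/

open Topology
open scoped InnerProduct

theorem IsClopen.isLocallyConstant_ite {X Y : Type*} [TopologicalSpace X] {U : Set X}
    [DecidablePred (· ∈ U)] (hU : IsClopen U) {f g : X → Y} (hf : IsLocallyConstant f)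
    (hg : IsLocallyConstant g) : IsLocallyConstant fun x => if x ∈ U then f x else g x := by
  refine (IsLocallyConstant.iff_eventually_eq _).2 fun x => ?_
  by_cases hx : x ∈ U
  · filter_upwards [hU.isOpen.mem_nhds hx, hf.eventually_eq x] with y hy hfy
    simp [hx, hy, hfy]
  · filter_upwards [hU.isClosed.isOpen_compl.mem_nhds hx, hg.eventually_eq x] with y hy hgy
    simp_all

section Conjugation

variable {𝕜 H K : Type*} [RCLike 𝕜] [NormedAddCommGroup H] [InnerProductSpace 𝕜 H]
  [CompleteSpace H] [NormedAddCommGroup K] [InnerProductSpace 𝕜 K] [CompleteSpace K]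

def ContinuousLinearMap.toLinearIsometryEquivOfAdjoint (u : H →L[𝕜] K) (h₁ : u† ∘L u = 1)
    (h₂ : u ∘L u† = 1) : H ≃ₗᵢ[𝕜] K :=
  .ofSurjective ⟨u, (u.norm_map_iff_adjoint_comp_self).2 h₁⟩
    fun y => ⟨(u†) y, congr($h₂ y)⟩

@[simp]
theorem ContinuousLinearMap.toLinearIsometryEquivOfAdjoint_apply (u : H →L[𝕜] K)
    (h₁ : u† ∘L u = 1) (h₂ : u ∘L u† = 1) (x : H) :
    u.toLinearIsometryEquivOfAdjoint h₁ h₂ x = u x :=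
  rfl

@[simp]
theorem ContinuousLinearMap.toLinearIsometryEquivOfAdjoint_symm_apply (u : H →L[𝕜] K)
    (h₁ : u† ∘L u = 1) (h₂ : u ∘L u† = 1) (y : K) :
    (u.toLinearIsometryEquivOfAdjoint h₁ h₂).symm y = (u†) y :=
  (u.toLinearIsometryEquivOfAdjoint h₁ h₂).injective (by simpa using congr($h₂ y).symm)

theorem LinearIsometryEquiv.continuous_conjStarAlgEquiv (e : H ≃ₗᵢ[𝕜] K) :
    Continuous e.conjStarAlgEquiv :=
  continuous_const.clm_comp (continuous_id.clm_comp continuous_const)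

end Conjugation

namespace MarkovShift

variable {M : ℕ} {C : Matrix (Fin M) (Fin M) ℕ}

theorem isClosed_setOf_admissible (C : Matrix (Fin M) (Fin M) ℕ) :
    IsClosed {x : ℕ → Fin M | ∀ n, C (x n) (x (n + 1)) = 1} := by
  simp only [Set.ofPred_forall]
  refine isClosed_iInter fun n => isClosed_eq ?_ continuous_const
  have hpair : Continuous fun x : ℕ → Fin M => (x n, x (n + 1)) :=
    (continuous_apply n).prodMk (continuous_apply (n + 1))
  exact (continuous_of_discreteTopology (f := Function.uncurry C)).comp hpair

instance : CompactSpace (MarkovShift C) :=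
  isCompact_iff_compactSpace.mp (isClosed_setOf_admissible C).isCompact

theorem continuous_mshift (C : Matrix (Fin M) (Fin M) ℕ) : Continuous (mshift C) :=
  continuous_induced_rng.2 <|
    continuous_pi fun n => (continuous_apply (n + 1)).comp continuous_subtype_val

theorem eq_mcons_iff {i : Fin M} {x z : MarkovShift C} (h : C i (x.1 0) = 1) :
    z = mcons C i x h ↔ z.1 0 = i ∧ mshift C z = x := by
  refine ⟨by rintro rfl; exact ⟨rfl, rfl⟩, fun ⟨h0, hs⟩ => Subtype.ext (funext fun n => ?_)⟩
  cases n with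
  | zero => exact h0
  | succ m => exact congrArg (fun y : MarkovShift C => y.1 m) hs

def prefixWord (z : MarkovShift C) (n : ℕ) : List (Fin M) :=
  List.ofFn fun j : Fin n => z.1 j

@[simp]
theorem length_prefixWord (z : MarkovShift C) (n : ℕ) : (prefixWord z n).length = n :=
  List.length_ofFn

theorem prefixWord_succ (z : MarkovShift C) (n : ℕ) :
    prefixWord z (n + 1) = z.1 0 :: prefixWord (mshift C z) n :=
  List.ofFn_succ

theorem mem_cylinder_iff_prefixWord_eq {x y : MarkovShift C} {n : ℕ} :
    y.1 ∈ PiNat.cylinder x.1 n ↔ prefixWord y n = prefixWord x n := by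
  rw [PiNat.mem_cylinder_iff, prefixWord, prefixWord, List.ofFn_inj, funext_iff]
  exact ⟨fun h j => h j j.2, fun h j hj => h ⟨j, hj⟩⟩

theorem isLocallyConstant_prefixWord (n : ℕ) :
    IsLocallyConstant fun z : MarkovShift C => prefixWord z n := by
  have hcont : Continuous fun z : MarkovShift C => fun j : Fin n => z.1 j :=
    continuous_pi fun j => (continuous_apply (j : ℕ)).comp continuous_subtype_val
  exact ((IsLocallyConstant.of_discrete List.ofFn).comp_continuous hcont :)

theorem isLocallyConstant_prefixWord_comp {Y : Type*} [TopologicalSpace Y]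
    {τ : Y → MarkovShift C} (hτ : Continuous τ) {n : Y → ℕ} (hn : Continuous n) :
    IsLocallyConstant fun y => prefixWord (τ y) (n y) := by
  refine (IsLocallyConstant.iff_eventually_eq _).2 fun y => ?_
  filter_upwards [((IsLocallyConstant.iff_continuous n).2 hn).eventually_eq y,
    hτ.continuousAt.preimage_mem_nhds
      (((isLocallyConstant_prefixWord (n y)).isOpen_fiber _).mem_nhds rfl)] with y' hn' hτ'
  rw [hn']
  exact hτ'

theorem exists_prefixWord_eq_subset {s : Set (MarkovShift C)} {x : MarkovShift C}
    (hs : s ∈ 𝓝 x) : ∃ n, ∀ y, prefixWord y n = prefixWord x n → y ∈ s := by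
  obtain ⟨t, ht, hts⟩ := (nhds_subtype _ x ▸ hs : s ∈ Filter.comap Subtype.val (𝓝 x.1))
  obtain ⟨_, ⟨z, n, rfl⟩, hx, hsub⟩ := (PiNat.isTopologicalBasis_cylinders _).mem_nhds_iff.1 ht
  refine ⟨n, fun y hy => hts (hsub ?_)⟩
  rw [← PiNat.mem_cylinder_iff_eq.1 hx]
  exact mem_cylinder_iff_prefixWord_eq.2 hy

theorem _root_.IsLocallyConstant.exists_eq_of_prefixWord_eq {Y : Type*}
    {f : MarkovShift C → Y} (hf : IsLocallyConstant f) :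
    ∃ n, ∀ x y, prefixWord x n = prefixWord y n → f x = f y := by
  choose n hn using fun x => exists_prefixWord_eq_subset (hf.eventually_eq x)
  obtain ⟨t, ht⟩ := isCompact_univ.elim_finite_subcover
    (fun x => {y | prefixWord y (n x) = prefixWord x (n x)})
    (fun x => (isLocallyConstant_prefixWord (n x)).isOpen_fiber _)
    (fun x _ => Set.mem_iUnion.2 ⟨x, rfl⟩)
  refine ⟨t.sup n, fun x y hxy => ?_⟩
  obtain ⟨x₀, hx₀, hx⟩ := Set.mem_iUnion₂.1 (ht (Set.mem_univ x))
  have hy : prefixWord y (n x₀) = prefixWord x₀ (n x₀) := by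
    rw [← mem_cylinder_iff_prefixWord_eq,
      ← PiNat.mem_cylinder_iff_eq.1 (mem_cylinder_iff_prefixWord_eq.2 hx)]
    exact PiNat.cylinder_anti _ (Finset.le_sup hx₀) (mem_cylinder_iff_prefixWord_eq.2 hxy.symm)
  exact (hn x₀ x hx).trans (hn x₀ y hy).symm

end MarkovShift

open MarkovShift

section BasisVec

variable {M M' : ℕ} {C : Matrix (Fin M) (Fin M) ℕ} {C' : Matrix (Fin M') (Fin M') ℕ}

theorem basisVec_eq_single [DecidableEq (MarkovShift C)] (x : MarkovShift C) :
    basisVec C x = lp.single 2 x 1 := by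
  unfold basisVec
  congr!

theorem basisVec_apply [DecidableEq (MarkovShift C)] (x y : MarkovShift C) :
    (basisVec C x : MarkovShift C → ℂ) y = if y = x then 1 else 0 := by
  rw [basisVec_eq_single, lp.single_apply, Pi.single_apply]

theorem inner_basisVec_left (x : MarkovShift C) (f : MSHilbert C) :
    inner ℂ (basisVec C x) f = f x := by
  classical
  rw [basisVec_eq_single, lp.inner_single_left, RCLike.inner_apply, map_one, mul_one]

theorem ContinuousLinearMap.ext_basisVec {F : Type*} [NormedAddCommGroup F] [NormedSpace ℂ F]
    {S T : MSHilbert C →L[ℂ] F} (h : ∀ x, S (basisVec C x) = T (basisVec C x)) : S = T := by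
  classical
  refine lp.ext_continuousLinearMap ENNReal.ofNat_ne_top fun x => ?_
  ext
  simpa [basisVec_eq_single] using h x

theorem adjoint_apply_basisVec_apply (T : MSHilbert C →L[ℂ] MSHilbert C')
    (x : MarkovShift C) (y : MarkovShift C') :
    ((T†) (basisVec C' y) : MarkovShift C → ℂ) x
      = starRingEnd ℂ ((T (basisVec C x) : MarkovShift C' → ℂ) y) := by
  rw [← inner_basisVec_left, ContinuousLinearMap.adjoint_inner_right, ← inner_basisVec_left,
    inner_conj_symm]

end BasisVec

section Words

variable {M : ℕ} {C : Matrix (Fin M) (Fin M) ℕ}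

theorem adjoint_apply_basisVec_of_isShiftOp {i : Fin M} {T : MSHilbert C →L[ℂ] MSHilbert C}
    (hT : IsShiftOp C i T) (z : MarkovShift C) :
    (T†) (basisVec C z) = if z.1 0 = i then basisVec C (mshift C z) else 0 := by
  classical
  ext x
  rw [adjoint_apply_basisVec_apply]
  by_cases hx : C i (x.1 0) = 1
  · rw [(hT x).1 hx]
    by_cases hz : z.1 0 = i <;> by_cases hs : mshift C z = x <;>
      simp [basisVec_apply, eq_mcons_iff hx, hz, hs, @eq_comm _ x]
  · rw [(hT x).2 hx]
    split_ifs with hz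
    · rw [basisVec_apply, if_neg]
      · simp
      rintro rfl
      exact hx (hz ▸ z.2 0)
    · simp

variable (TC : Fin M → (MSHilbert C →L[ℂ] MSHilbert C))

def wordOp (w : List (Fin M)) : MSHilbert C →L[ℂ] MSHilbert C :=
  (w.map TC).prod

theorem wordOp_mem_CKalg (w : List (Fin M)) : wordOp TC w ∈ CKalg C TC :=
  list_prod_mem fun _ hT => by
    obtain ⟨j, -, rfl⟩ := List.mem_map.1 hT
    exact StarSubalgebra.le_topologicalClosure _ (StarAlgebra.subset_adjoin ℂ _ ⟨j, rfl⟩)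

variable {TC}

theorem wordOp_prefixWord_apply (hTC : IsGenFamily C TC) (n : ℕ) (z : MarkovShift C) :
    wordOp TC (prefixWord z n) (basisVec C ((mshift C)^[n] z)) = basisVec C z := by
  induction n generalizing z with
  | zero => rfl
  | succ n ih =>
    rw [prefixWord_succ, Function.iterate_succ_apply, wordOp, List.map_cons, List.prod_cons,
      mul_apply_eq_comp, ← wordOp, ih, (hTC _ _).1 (z.2 0)]
    exact congrArg _ ((eq_mcons_iff _).2 ⟨rfl, rfl⟩).symm

theorem adjoint_wordOp_apply (hTC : IsGenFamily C TC) (w : List (Fin M)) (z : MarkovShift C) :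
    ((wordOp TC w)†) (basisVec C z)
      = if prefixWord z w.length = w then basisVec C ((mshift C)^[w.length] z) else 0 := by
  induction w generalizing z with
  | nil => simp [wordOp, prefixWord, ContinuousLinearMap.adjoint_one]
  | cons j w ih =>
    rw [wordOp, List.map_cons, List.prod_cons, ← wordOp, ContinuousLinearMap.mul_def,
      ContinuousLinearMap.adjoint_comp, ContinuousLinearMap.comp_apply,
      adjoint_apply_basisVec_of_isShiftOp (hTC j), List.length_cons, prefixWord_succ,
      Function.iterate_succ_apply]
    by_cases hz : z.1 0 = j <;> simp [hz, ih]

theorem wordOp_adjoint_wordOp_apply (hTC : IsGenFamily C TC) {y z : MarkovShift C} {m n : ℕ}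
    (h : (mshift C)^[m] y = (mshift C)^[n] z) :
    wordOp TC (prefixWord y m) (((wordOp TC (prefixWord z n))†) (basisVec C z)) = basisVec C y := by
  rw [adjoint_wordOp_apply hTC, length_prefixWord, if_pos rfl, ← h, wordOp_prefixWord_apply hTC]

theorem wordOp_mul_star_apply (hTC : IsGenFamily C TC) (w : List (Fin M)) (z : MarkovShift C) :
    (wordOp TC w * star (wordOp TC w)) (basisVec C z)
      = if prefixWord z w.length = w then basisVec C z else 0 := by
  rw [mul_apply_eq_comp, ContinuousLinearMap.star_eq_adjoint, adjoint_wordOp_apply hTC]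
  split_ifs with hw
  · nth_rewrite 1 [← hw]
    exact wordOp_prefixWord_apply hTC _ z
  · exact map_zero _

end Words

section Membership

variable {M : ℕ} {C : Matrix (Fin M) (Fin M) ℕ} {TC : Fin M → (MSHilbert C →L[ℂ] MSHilbert C)}

theorem exists_mem_CKalg_apply_basisVec_eq_ite (hTC : IsGenFamily C TC) {Y : Type*}
    [DecidableEq Y] {f : MarkovShift C → Y} (hf : IsLocallyConstant f) (c : Y) :
    ∃ P ∈ CKalg C TC, ∀ z, P (basisVec C z) = if f z = c then basisVec C z else 0 := by
  obtain ⟨n, hn⟩ := hf.exists_eq_of_prefixWord_eq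
  have hfin : ((prefixWord · n) '' {z | f z = c}).Finite :=
    (isLocallyConstant_prefixWord n).range_finite.subset (Set.image_subset_range _ _)
  have hlen : ∀ w ∈ hfin.toFinset, w.length = n := by
    intro w hw
    obtain ⟨z, -, rfl⟩ := hfin.mem_toFinset.1 hw
    exact length_prefixWord z n
  refine ⟨∑ w ∈ hfin.toFinset, wordOp TC w * star (wordOp TC w),
    sum_mem fun w _ => mul_mem (wordOp_mem_CKalg TC w) (star_mem (wordOp_mem_CKalg TC w)),
    fun z => ?_⟩
  rw [_root_.sum_apply,
    Finset.sum_congr rfl fun w hw => by rw [wordOp_mul_star_apply hTC, hlen w hw],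
    Finset.sum_ite_eq]
  refine if_congr ?_ rfl rfl
  rw [hfin.mem_toFinset]
  exact ⟨fun ⟨y, hy, hyz⟩ => (hn z y hyz.symm).trans hy, fun hz => ⟨z, hz, rfl⟩⟩

theorem mem_CKalg_of_iterate_mshift_eq (hTC : IsGenFamily C TC) {U : Set (MarkovShift C)}
    [DecidablePred (· ∈ U)] (hU : IsClopen U) {τ : MarkovShift C → MarkovShift C}
    (hτ : Continuous τ) {k l : MarkovShift C → ℕ} (hk : Continuous k) (hl : Continuous l)
    (hkl : ∀ x ∈ U, (mshift C)^[k x] (τ x) = (mshift C)^[l x] x)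
    {R : MSHilbert C →L[ℂ] MSHilbert C}
    (hR : ∀ x, R (basisVec C x) = if x ∈ U then basisVec C (τ x) else 0) :
    R ∈ CKalg C TC := by
  set D : MarkovShift C → List (Fin M) × List (Fin M) :=
    fun x => (prefixWord (τ x) (k x), prefixWord x (l x))
  have hD : IsLocallyConstant D := (isLocallyConstant_prefixWord_comp hτ hk).prodMk
    (isLocallyConstant_prefixWord_comp continuous_id hl)
  have hfin : (D '' U).Finite := hD.range_finite.subset (Set.image_subset_range _ _)
  choose P hPmem hP using exists_mem_CKalg_apply_basisVec_eq_ite hTC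
    (hU.isLocallyConstant_ite (hD.comp some) (IsLocallyConstant.const none))
  have hterm : ∀ c x, (wordOp TC c.1 * star (wordOp TC c.2) * P (some c)) (basisVec C x)
      = if D x = c then R (basisVec C x) else 0 := by
    intro c x
    rw [mul_apply_eq_comp, mul_apply_eq_comp, hP, hR]
    by_cases hx : x ∈ U
    · by_cases hc : D x = c
      · subst hc
        simpa [hx, ContinuousLinearMap.star_eq_adjoint] using
          wordOp_adjoint_wordOp_apply hTC (hkl x hx)
      · simp [hx, hc]
    · simp [hx]
  suffices R = ∑ c ∈ hfin.toFinset, wordOp TC c.1 * star (wordOp TC c.2) * P (some c) from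
    this ▸ sum_mem fun c _ =>
      mul_mem (mul_mem (wordOp_mem_CKalg TC _) (star_mem (wordOp_mem_CKalg TC _))) (hPmem _)
  refine ContinuousLinearMap.ext_basisVec fun x => ?_
  rw [_root_.sum_apply, Finset.sum_congr rfl fun c _ => hterm c x, Finset.sum_ite_eq]
  split_ifs with hx
  · rfl
  · rw [hR, if_neg fun hxU => hx (hfin.mem_toFinset.2 ⟨x, hxU, rfl⟩)]

end Membership

section OrbitEquivalence

variable {N N' : ℕ} {A : Matrix (Fin N) (Fin N) ℕ} {B : Matrix (Fin N') (Fin N') ℕ}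
  {TA : Fin N → (MSHilbert A →L[ℂ] MSHilbert A)} {TB : Fin N' → (MSHilbert B →L[ℂ] MSHilbert B)}
  {u : MSHilbert A →L[ℂ] MSHilbert B}

theorem adjoint_apply_basisVec_of_apply_basisVec {g : MarkovShift A ≃ MarkovShift B}
    (hu : ∀ x, u (basisVec A x) = basisVec B (g x)) (y : MarkovShift B) :
    (u†) (basisVec B y) = basisVec A (g.symm y) := by
  classical
  ext x
  rw [adjoint_apply_basisVec_apply, hu, basisVec_apply, basisVec_apply]
  by_cases hx : y = g x <;> simp [hx, g.eq_symm_apply, eq_comm]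

theorem adjoint_comp_self_of_apply_basisVec {g : MarkovShift A ≃ MarkovShift B}
    (hu : ∀ x, u (basisVec A x) = basisVec B (g x)) : u† ∘L u = 1 :=
  ContinuousLinearMap.ext_basisVec fun x => by
    simp [hu, adjoint_apply_basisVec_of_apply_basisVec hu]

theorem self_comp_adjoint_of_apply_basisVec {g : MarkovShift A ≃ MarkovShift B}
    (hu : ∀ x, u (basisVec A x) = basisVec B (g x)) : u ∘L u† = 1 :=
  ContinuousLinearMap.ext_basisVec fun y => by
    simp [hu, adjoint_apply_basisVec_of_apply_basisVec hu]

theorem conj_gen_mem_CKalg (hTA : IsGenFamily A TA) (hTB : IsGenFamily B TB)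
    (g : MarkovShift A ≃ₜ MarkovShift B) {k l : MarkovShift A → ℕ}
    (hk : Continuous k) (hl : Continuous l)
    (hkl : ∀ x, (mshift B)^[k x] (g (mshift A x)) = (mshift B)^[l x] (g x))
    (hu : ∀ x, u (basisVec A x) = basisVec B (g x)) (i : Fin N) :
    u ∘L TA i ∘L u† ∈ CKalg B TB := by
  classical
  have hu' := adjoint_apply_basisVec_of_apply_basisVec (g := g.toEquiv) hu
  have hclopen : IsClopen {y | (g.symm y).1 0 = i} :=
    (isClopen_discrete {i}).preimage
      (((continuous_apply 0).comp continuous_subtype_val).comp g.symm.continuous)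
  -- `T_i^*` moves points along the globally defined shift, unlike `T_i`
  have hstar : u ∘L (TA i)† ∘L u† ∈ CKalg B TB := by
    refine mem_CKalg_of_iterate_mshift_eq hTB hclopen
      (g.continuous.comp ((continuous_mshift A).comp g.symm.continuous))
      (hk.comp g.symm.continuous) (hl.comp g.symm.continuous)
      (fun y _ => by simpa using hkl (g.symm y)) fun y => ?_
    simp only [ContinuousLinearMap.comp_apply]
    rw [hu', Homeomorph.coe_symm_toEquiv, adjoint_apply_basisVec_of_isShiftOp (hTA i)]
    by_cases hy : (g.symm y).1 0 = i <;> simp [hy, hu]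
  simpa [ContinuousLinearMap.star_eq_adjoint, ContinuousLinearMap.adjoint_comp,
    ContinuousLinearMap.comp_assoc] using star_mem hstar

theorem CKalg_map_le {φ : (MSHilbert A →L[ℂ] MSHilbert A) →⋆ₐ[ℂ] (MSHilbert B →L[ℂ] MSHilbert B)}
    (hφ : Continuous φ) (hgen : ∀ i, φ (TA i) ∈ CKalg B TB) :
    (CKalg A TA).map φ ≤ CKalg B TB := by
  refine (StarSubalgebra.map_topologicalClosure_le _ φ hφ).trans
    (StarSubalgebra.topologicalClosure_minimal ?_ (StarSubalgebra.isClosed_topologicalClosure _))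
  rw [StarAlgHom.map_adjoin]
  refine StarAlgebra.adjoin_le ?_
  rintro _ ⟨_, ⟨i, rfl⟩, rfl⟩
  exact hgen i

theorem image_conj_CKalg_eq (hTA : IsGenFamily A TA) (hTB : IsGenFamily B TB)
    (h : MarkovShift A ≃ₜ MarkovShift B) {k₁ l₁ : MarkovShift A → ℕ}
    (hk₁ : Continuous k₁) (hl₁ : Continuous l₁)
    (hcoc₁ : ∀ x, (mshift B)^[k₁ x] (h (mshift A x)) = (mshift B)^[l₁ x] (h x))
    {k₂ l₂ : MarkovShift B → ℕ} (hk₂ : Continuous k₂) (hl₂ : Continuous l₂)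
    (hcoc₂ : ∀ y, (mshift A)^[k₂ y] (h.symm (mshift B y)) = (mshift A)^[l₂ y] (h.symm y))
    (hu : ∀ x, u (basisVec A x) = basisVec B (h x)) :
    (fun a => u ∘L a ∘L u†) '' (CKalg A TA : Set _) = CKalg B TB := by
  have hu' := adjoint_apply_basisVec_of_apply_basisVec (g := h.toEquiv) hu
  set e := u.toLinearIsometryEquivOfAdjoint (adjoint_comp_self_of_apply_basisVec (g := h.toEquiv) hu)
    (self_comp_adjoint_of_apply_basisVec (g := h.toEquiv) hu)
  have hΦ : ⇑e.conjStarAlgEquiv = fun a => u ∘L a ∘L u† := by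
    ext a x
    simp [e]
  have hΦ_symm : ⇑e.symm.conjStarAlgEquiv = fun b => u† ∘L b ∘L u := by
    ext b x
    simp [e]
  have hmapA : (CKalg A TA).map e.conjStarAlgEquiv.toStarAlgHom ≤ CKalg B TB :=
    CKalg_map_le e.continuous_conjStarAlgEquiv fun i => by
      simpa [hΦ] using conj_gen_mem_CKalg hTA hTB h hk₁ hl₁ hcoc₁ hu i
  have hmapB : (CKalg B TB).map e.symm.conjStarAlgEquiv.toStarAlgHom ≤ CKalg A TA :=
    CKalg_map_le e.symm.continuous_conjStarAlgEquiv fun j => by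
      simpa [hΦ_symm] using conj_gen_mem_CKalg hTB hTA h.symm hk₂ hl₂ hcoc₂ hu' j
  rw [← hΦ]
  exact Set.Subset.antisymm hmapA fun b hb =>
    ⟨e.conjStarAlgEquiv.symm b, hmapB ⟨b, hb, rfl⟩, e.conjStarAlgEquiv.apply_symm_apply b⟩

theorem conj_multOp_eq {MA : C(MarkovShift A, ℂ) → (MSHilbert A →L[ℂ] MSHilbert A)}
    {MB : C(MarkovShift B, ℂ) → (MSHilbert B →L[ℂ] MSHilbert B)} (hMA : IsMultOp A MA)
    (hMB : IsMultOp B MB) {h : MarkovShift A ≃ₜ MarkovShift B}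
    (hu : ∀ x, u (basisVec A x) = basisVec B (h x)) (f : C(MarkovShift A, ℂ)) :
    u ∘L MA f ∘L u† = MB (f.comp (h.symm : C(MarkovShift B, MarkovShift A))) :=
  ContinuousLinearMap.ext_basisVec fun y => by
    rw [ContinuousLinearMap.comp_apply, ContinuousLinearMap.comp_apply,
      adjoint_apply_basisVec_of_apply_basisVec (g := h.toEquiv) hu, hMA, map_smul, hu, hMB]
    simp

end OrbitEquivalence

theorem conjugate_CKalg_of_topOrbitEquiv_general
    {N N' : ℕ} (A : Matrix (Fin N) (Fin N) ℕ) (B : Matrix (Fin N') (Fin N') ℕ)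
    (TA : Fin N → (MSHilbert A →L[ℂ] MSHilbert A)) (hTA : IsGenFamily A TA)
    (MA : C(MarkovShift A, ℂ) → (MSHilbert A →L[ℂ] MSHilbert A)) (hMA : IsMultOp A MA)
    (TB : Fin N' → (MSHilbert B →L[ℂ] MSHilbert B)) (hTB : IsGenFamily B TB)
    (MB : C(MarkovShift B, ℂ) → (MSHilbert B →L[ℂ] MSHilbert B)) (hMB : IsMultOp B MB)
    (h : MarkovShift A ≃ₜ MarkovShift B)
    (k₁ l₁ : MarkovShift A → ℕ) (hk₁ : Continuous k₁) (hl₁ : Continuous l₁)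
    (hcoc₁ : ∀ x, (mshift B)^[k₁ x] (h (mshift A x)) = (mshift B)^[l₁ x] (h x))
    (k₂ l₂ : MarkovShift B → ℕ) (hk₂ : Continuous k₂) (hl₂ : Continuous l₂)
    (hcoc₂ : ∀ y, (mshift A)^[k₂ y] (h.symm (mshift B y)) = (mshift A)^[l₂ y] (h.symm y))
    (u : MSHilbert A →L[ℂ] MSHilbert B)
    (hu : ∀ x : MarkovShift A, u (basisVec A x) = basisVec B (h x)) :
    -- `u` is a unitary
    (ContinuousLinearMap.adjoint u ∘L u = 1 ∧ u ∘L ContinuousLinearMap.adjoint u = 1)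
    -- `u O_A u^* = O_B`
    ∧ (fun a => u ∘L a ∘L ContinuousLinearMap.adjoint u) '' (CKalg A TA : Set _)
        = (CKalg B TB : Set _)
    -- `u M_f u^* = M_{f ∘ h⁻¹}`
    ∧ (∀ f : C(MarkovShift A, ℂ),
        u ∘L MA f ∘L ContinuousLinearMap.adjoint u
          = MB (f.comp (h.symm : C(MarkovShift B, MarkovShift A))))
    -- `u D_A u^* = D_B`
    ∧ (fun a => u ∘L a ∘L ContinuousLinearMap.adjoint u) '' Set.range MA
        = Set.range MB := by
  have hmult := conj_multOp_eq hMA hMB hu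
  have hsurj : Function.Surjective fun f : C(MarkovShift A, ℂ) =>
      f.comp (h.symm : C(MarkovShift B, MarkovShift A)) :=
    fun f => ⟨f.comp (h : C(MarkovShift A, MarkovShift B)), by ext; simp⟩
  refine ⟨⟨adjoint_comp_self_of_apply_basisVec (g := h.toEquiv) hu,
    self_comp_adjoint_of_apply_basisVec (g := h.toEquiv) hu⟩,
    image_conj_CKalg_eq hTA hTB h hk₁ hl₁ hcoc₁ hk₂ hl₂ hcoc₂ hu, hmult, ?_⟩
  rw [← Set.range_comp, show (fun a => u ∘L a ∘L u†) ∘ MA = MB ∘ _ from funext hmult]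
  exact hsurj.range_comp MB

/-- assume `A` and `B` satisfy condition (I).  If `h : X_A → X_B`
implements a topological orbit equivalence, then the unitary
`u_h : ℓ²(X_A) → ℓ²(X_B)` with `u_h e_x = e_{h(x)}` satisfies `u_h O_A u_h^* = O_B` and
`u_h M_f u_h^* = M_{f∘h⁻¹}` for all `f ∈ C(X_A, ℂ)`; in particular
`u_h D_A u_h^* = D_B`, so `Ad(u_h)` is an isomorphism `Φ : O_A → O_B` with
`Φ(D_A) = D_B`. -/
theorem conjugate_CKalg_of_topOrbitEquiv
    {N N' : ℕ} (A : Matrix (Fin N) (Fin N) ℕ) (B : Matrix (Fin N') (Fin N') ℕ)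
    (hA : ∀ i j, A i j = 0 ∨ A i j = 1) (hB : ∀ i j, B i j = 0 ∨ B i j = 1)
    (hIA : ConditionI A) (hIB : ConditionI B)
    (TA : Fin N → (MSHilbert A →L[ℂ] MSHilbert A)) (hTA : IsGenFamily A TA)
    (MA : C(MarkovShift A, ℂ) → (MSHilbert A →L[ℂ] MSHilbert A)) (hMA : IsMultOp A MA)
    (TB : Fin N' → (MSHilbert B →L[ℂ] MSHilbert B)) (hTB : IsGenFamily B TB)
    (MB : C(MarkovShift B, ℂ) → (MSHilbert B →L[ℂ] MSHilbert B)) (hMB : IsMultOp B MB)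
    (h : MarkovShift A ≃ₜ MarkovShift B)
    (horb : ∀ x, h '' orb A x = orb B (h x))
    (k₁ l₁ : MarkovShift A → ℕ) (hk₁ : Continuous k₁) (hl₁ : Continuous l₁)
    (hcoc₁ : ∀ x, (mshift B)^[k₁ x] (h (mshift A x)) = (mshift B)^[l₁ x] (h x))
    (k₂ l₂ : MarkovShift B → ℕ) (hk₂ : Continuous k₂) (hl₂ : Continuous l₂)
    (hcoc₂ : ∀ y, (mshift A)^[k₂ y] (h.symm (mshift B y)) = (mshift A)^[l₂ y] (h.symm y))
    (u : MSHilbert A →L[ℂ] MSHilbert B)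
    (hu : ∀ x : MarkovShift A, u (basisVec A x) = basisVec B (h x)) :
    -- `u` is a unitary
    (ContinuousLinearMap.adjoint u ∘L u = 1 ∧ u ∘L ContinuousLinearMap.adjoint u = 1)
    -- `u O_A u^* = O_B`
    ∧ (fun a => u ∘L a ∘L ContinuousLinearMap.adjoint u) '' (CKalg A TA : Set _)
        = (CKalg B TB : Set _)
    -- `u M_f u^* = M_{f ∘ h⁻¹}`
    ∧ (∀ f : C(MarkovShift A, ℂ),
        u ∘L MA f ∘L ContinuousLinearMap.adjoint u
          = MB (f.comp (h.symm : C(MarkovShift B, MarkovShift A))))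
    -- `u D_A u^* = D_B`
    ∧ (fun a => u ∘L a ∘L ContinuousLinearMap.adjoint u) '' Set.range MA
        = Set.range MB :=
  conjugate_CKalg_of_topOrbitEquiv_general A B TA hTA MA hMA TB hTB MB hMB h k₁ l₁ hk₁ hl₁ hcoc₁ k₂
    l₂ hk₂ hl₂ hcoc₂ u hu
end
end
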